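/- Let X be a nonempty finite set, let P = (p_{xy}) be a row-stochastic matrix indexed by X, let π be a stationary distribution of P with all entries strictly positive, and let P* be the time-reversed chain defined by p*_{yx} = π_x p_{xy} / π_y. In the real inner product space ℝ^{X×X}, define for each x the vector a_x by a_x(x′, y) = [x′ = x]·√(p_{xy}), for each y the vector b_y by b_y(x, y′) = [y′ = y]·√(p*_{yx}), and the subspaces A = span{a_x : x ∈ X} and B = span{b_y : y ∈ X}. Then the vector f defined by f(x,y) = √(π_x p_{xy}) satisfies f = Σ_x √(π_x) a_x = Σ_y √(π_y) b_y, so f ∈ A ⊓ B; consequently f is fixed by the quantum walk W(P) = ref(B) ∘ ref(A), i.e., ref(B)(ref(A) f) = f, where ref(K) = 2Π_K − Id is the reflection through the subspace K. -/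

import Mathlib

/-- The orthogonal projection onto a subspace, as an operator on the whole space. -/
noncomputable def projOpR {H : Type*} [NormedAddCommGroup H] [InnerProductSpace ℝ H]
    [FiniteDimensional ℝ H] (K : Submodule ℝ H) : H →L[ℝ] H :=
  K.subtypeL.comp (K.orthogonalProjectionOnto)

/-- The reflection `ref(K) = 2Π_K − Id` through a subspace `K`. -/
noncomputable def reflOpR {H : Type*} [NormedAddCommGroup H] [InnerProductSpace ℝ H]
    [FiniteDimensional ℝ H] (K : Submodule ℝ H) : H →L[ℝ] H :=
  2 • projOpR K - 1

theorem stationary_state_fixed_by_quantum_walk {X : Type*} [Fintype X] [DecidableEq X]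
    [Nonempty X]
    (P : Matrix X X ℝ)
    (hnn : ∀ x y, 0 ≤ P x y) (hrow : ∀ x, ∑ y, P x y = 1)
    (pr : X → ℝ) (hpos : ∀ x, 0 < pr x) (hsum : ∑ x, pr x = 1)
    (hstat : ∀ y, ∑ x, pr x * P x y = pr y)
    (Pstar : Matrix X X ℝ) (hPstar : ∀ y x, Pstar y x = pr x * P x y / pr y)
    (a b : X → EuclideanSpace ℝ (X × X))
    (ha : ∀ x p, a x p = if p.1 = x then Real.sqrt (P x p.2) else 0)
    (hb : ∀ y p, b y p = if p.2 = y then Real.sqrt (Pstar y p.1) else 0)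
    (A B : Submodule ℝ (EuclideanSpace ℝ (X × X)))
    (hA : A = Submodule.span ℝ (Set.range a))
    (hB : B = Submodule.span ℝ (Set.range b))
    (f : EuclideanSpace ℝ (X × X))
    (hf : ∀ p, f p = Real.sqrt (pr p.1 * P p.1 p.2)) :
    f = ∑ x, Real.sqrt (pr x) • a x ∧
    f = ∑ y, Real.sqrt (pr y) • b y ∧
    f ∈ A ⊓ B ∧
    reflOpR B (reflOpR A f) = f := by
  have key1 : f = ∑ x, Real.sqrt (pr x) • a x := by
    refine (WithLp.ext_iff (p := 2)).2 (funext fun p => ?_)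
    have h1 : (∑ x, Real.sqrt (pr x) • a x) p = ∑ x, Real.sqrt (pr x) * a x p := by
      rw [WithLp.ofLp_sum, Finset.sum_apply]
      exact Finset.sum_congr rfl fun x _ => rfl
    rw [h1, hf]
    rw [Finset.sum_eq_single p.1]
    · rw [ha]
      simp [Real.sqrt_mul (le_of_lt (hpos p.1))]
    · intro x _ hx
      rw [ha]
      simp [Ne.symm hx]
    · simp
  have key2 : f = ∑ y, Real.sqrt (pr y) • b y := by
    refine (WithLp.ext_iff (p := 2)).2 (funext fun p => ?_)
    have h1 : (∑ y, Real.sqrt (pr y) • b y) p = ∑ y, Real.sqrt (pr y) * b y p := by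
      rw [WithLp.ofLp_sum, Finset.sum_apply]
      exact Finset.sum_congr rfl fun x _ => rfl
    rw [h1, hf]
    rw [Finset.sum_eq_single p.2]
    · rw [hb, hPstar, if_pos rfl, ← Real.sqrt_mul (le_of_lt (hpos p.2))]
      congr 1
      rw [mul_comm (pr p.2), div_mul_cancel₀ _ (ne_of_gt (hpos p.2))]
    · intro y _ hy
      rw [hb]
      simp [Ne.symm hy]
    · simp
  have hfA : f ∈ A := by
    rw [key1, hA]
    exact Submodule.sum_mem _ fun x _ =>
      Submodule.smul_mem _ _ (Submodule.subset_span ⟨x, rfl⟩)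
  have hfB : f ∈ B := by
    rw [key2, hB]
    exact Submodule.sum_mem _ fun y _ =>
      Submodule.smul_mem _ _ (Submodule.subset_span ⟨y, rfl⟩)
  have hrefl : ∀ (K : Submodule ℝ (EuclideanSpace ℝ (X × X))) (v : EuclideanSpace ℝ (X × X)),
      v ∈ K → reflOpR K v = v := by
    intro K v hv
    simp only [reflOpR, projOpR, ContinuousLinearMap.sub_apply, ContinuousLinearMap.smul_apply,
      ContinuousLinearMap.one_apply, ContinuousLinearMap.comp_apply, Submodule.subtypeL_apply]
    rw [show (K.orthogonalProjectionOnto v : EuclideanSpace ℝ (X × X)) = v from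
      Submodule.starProjection_eq_self_iff.2 hv, two_smul]
    abel
  refine ⟨key1, key2, ⟨hfA, hfB⟩, ?_⟩
  rw [hrefl A f hfA, hrefl B f hfB]
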